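/- Let Γ be a homogeneous k-dimensional permutation structure with minimal non-trivial ∅-definable equivalence relation E such that E-classes are <_i-convex for 1 ≤ i ≤ ℓ and <_i-dense for ℓ+1 ≤ i ≤ k, and such that each E-class is generic (modulo agreement of certain orders up to reversal). Then the quotient structure (Γ/E, <₁,…,<_ℓ) is homogeneous: every isomorphism between finite substructures of the quotient extends to an automorphism of the quotient. -/

import Mathlib

/-!
Lift a finite partial isomorphism `f` of `Γ/E` to a partial isomorphism of `Γ`, one point at a
time, choosing the image of each point in the `E`-class prescribed by `f`; an automorphism of `Γ`
extending the lift (homogeneity of `Γ`) then induces the required automorphism of `Γ/E`.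

If the class of the new point `a` already meets the domain, an automorphism of `Γ` extending the
current lift sends `a` into the right class. Otherwise the class of `f a` must contain a point in
the right position for every order. For a convex order any point of the class will do, since such
an order compares distinct classes as wholes. For a dense order the right position is an open
interval, cut out by the current lift and realised by the image of `a` under an extending
automorphism; it meets the class by density, and genericity of the class puts one point in all
these intervals at once.
-/

section StrictTotalOrder

variable {α : Type*} (r : α → α → Prop)

def ConvexClasses (E : α → α → Prop) : Prop :=
  ∀ a b c, E a c → r a b → r b c → E a b

def DenseClasses (E : α → α → Prop) : Prop :=
  ∀ a b, r a b → ∀ c, ∃ x, E x c ∧ r a x ∧ r x b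

variable [IsStrictTotalOrder α r]

theorem Finset.exists_max_of_isStrictTotalOrder (s : Finset α) (hs : s.Nonempty) :
    ∃ m ∈ s, ∀ x ∈ s, x = m ∨ r x m := by
  obtain ⟨m, hm, hmax⟩ :=
    (Set.wellFoundedOn_iff.mp (s.wellFoundedOn (r := Function.swap r))).has_min s hs
  refine ⟨m, hm, fun x hx => ?_⟩
  rcases trichotomous_of r x m with h | h | h
  · exact Or.inr h
  · exact Or.inl h
  · exact absurd ⟨h, hx, hm⟩ (hmax x hx)

theorem exists_option_pred (s : Finset α) (a : α) :
    ∃ p : Option α, (∀ m ∈ p, r m a) ∧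
      ∀ y ∈ s, r y a → ∃ m ∈ p, y = m ∨ r y m := by
  classical
  by_cases h : (s.filter (r · a)).Nonempty
  · obtain ⟨m, hm, hmax⟩ := Finset.exists_max_of_isStrictTotalOrder r _ h
    refine ⟨some m, ?_, fun y hy hya => ⟨m, rfl, hmax y (by simp [hy, hya])⟩⟩
    simpa using (Finset.mem_filter.mp hm).2
  · exact ⟨none, by simp, fun y hy hya => absurd ⟨y, by simp [hy, hya]⟩ h⟩

theorem exists_cut_interval_of_dense {C : α → Prop} (hC : ∃ x, C x)
    (hdense : ∀ u w, r u w → ∃ x, C x ∧ r u x ∧ r x w) (T : Finset α) (a : α) :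
    ∃ lo hi : Option α, (∃ x, C x ∧ (∀ u ∈ lo, r u x) ∧ ∀ w ∈ hi, r x w) ∧
      ∀ x, (∀ u ∈ lo, r u x) → (∀ w ∈ hi, r x w) →
        ∀ t ∈ T, (r t a → r t x) ∧ (r a t → r x t) := by
  obtain ⟨lo, hlo, hlo_max⟩ := exists_option_pred r T a
  obtain ⟨hi, hhi, hhi_min⟩ := exists_option_pred (Function.swap r) T a
  refine ⟨lo, hi, ?_, fun x hlx hxh t ht => ⟨fun hta => ?_, fun hat => ?_⟩⟩
  · cases lo with
    | none => cases hi with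
      | none => obtain ⟨x, hx⟩ := hC; exact ⟨x, hx, by simp, by simp⟩
      | some w =>
        obtain ⟨x, hx, -, hxw⟩ := hdense a w (hhi w rfl)
        exact ⟨x, hx, by simp, by simpa using hxw⟩
    | some u => cases hi with
      | none =>
        obtain ⟨x, hx, hux, -⟩ := hdense u a (hlo u rfl)
        exact ⟨x, hx, by simpa using hux, by simp⟩
      | some w =>
        obtain ⟨x, hx, hux, hxw⟩ := hdense u w (trans_of r (hlo u rfl) (hhi w rfl))
        exact ⟨x, hx, by simpa using hux, by simpa using hxw⟩
  · obtain ⟨m, hm, rfl | htm⟩ := hlo_max t ht hta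
    · exact hlx t hm
    · exact trans_of r htm (hlx m hm)
  · obtain ⟨m, hm, rfl | hmt⟩ := hhi_min t ht hat
    · exact hxh t hm
    · exact trans_of r (hxh m hm) hmt

theorem rel_iff_rel_of_imp_of_imp {x y x' y' : α} (hxy : x ≠ y) (h : r x y → r x' y')
    (h' : r y x → r y' x') : r x y ↔ r x' y' := by
  refine ⟨h, fun hxy' => ?_⟩
  rcases trichotomous_of r x y with hlt | heq | hgt
  · exact hlt
  · exact absurd heq hxy
  · exact absurd (h' hgt) (asymm_of r hxy')

variable {r} in
theorem ConvexClasses.rel_of_rel {E : α → α → Prop} (hconv : ConvexClasses r E)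
    (hE : Equivalence E) {x y x' y' : α} (hxy : ¬ E x y) (hx : E x x') (hy : E y y')
    (h : r x y) : r x' y' := by
  rcases trichotomous_of r x' y' with h' | rfl | h'
  · exact h'
  · exact absurd (hE.trans hx (hE.symm hy)) hxy
  · rcases trichotomous_of r y x' with hyx' | rfl | hx'y
    · exact absurd (hconv x y x' hx h hyx') hxy
    · exact absurd hx hxy
    · have hy'x' : E y' x' := hconv y' x' y (hE.symm hy) h' hx'y
      exact (hxy (hE.trans hx (hE.trans (hE.symm hy'x') (hE.symm hy)))).elim

end StrictTotalOrder

section PermutationStructure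

variable {Γ ι : Type*} (o : ι → Γ → Γ → Prop)

def IsPartialIso (s : Finset Γ) (f : Γ → Γ) : Prop :=
  ∀ x ∈ s, ∀ y ∈ s, ∀ i, o i x y ↔ o i (f x) (f y)

def IsHomogeneous : Prop :=
  ∀ (A : Finset Γ) (f : Γ → Γ), IsPartialIso o A f →
    ∃ g : Γ ≃ Γ, (∀ i x y, o i x y ↔ o i (g x) (g y)) ∧ ∀ a ∈ A, g a = f a

/-- A partial isomorphism of `Γ/E` with the orders indexed by `Q`, given on representatives. -/
def IsQuotientPartialIso (E : Γ → Γ → Prop) (Q : Set ι) (A : Finset Γ) (f : Γ → Γ) :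
    Prop :=
  ∀ a ∈ A, ∀ b ∈ A, (E a b ↔ E (f a) (f b)) ∧
    (¬ E a b → ∀ i ∈ Q, (o i a b ↔ o i (f a) (f b)))

/-- `lo i` and `hi i` bound an open interval of the `i`-th order; `none` leaves it unbounded. -/
def GenericClasses (E : Γ → Γ → Prop) : Prop :=
  ∀ c : Γ, ∀ lo hi : ι → Option Γ,
    (∀ i, ∃ x, E x c ∧ (∀ u ∈ lo i, o i u x) ∧ ∀ w ∈ hi i, o i x w) →
      ∃ x, E x c ∧ ∀ i, (∀ u ∈ lo i, o i u x) ∧ ∀ w ∈ hi i, o i x w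

variable {o}

theorem IsPartialIso.update_insert [DecidableEq Γ] [∀ i, Std.Irrefl (o i)] {s : Finset Γ}
    {b : Γ → Γ} {a v : Γ} (hb : IsPartialIso o s b) (ha : a ∉ s)
    (hv : ∀ y ∈ s, ∀ i, (o i y a ↔ o i (b y) v) ∧ (o i a y ↔ o i v (b y))) :
    IsPartialIso o (insert a s) (Function.update b a v) := by
  have hup : ∀ z ∈ s, Function.update b a v z = b z := fun z hz =>
    Function.update_of_ne (ne_of_mem_of_not_mem hz ha) _ _
  intro x hx y hy i
  rcases Finset.mem_insert.mp hx with rfl | hxs <;>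
    rcases Finset.mem_insert.mp hy with rfl | hys
  · simpa only [Function.update_self] using iff_of_false (irrefl_of _ _) (irrefl_of _ _)
  · rw [Function.update_self, hup y hys]; exact (hv y hys i).2
  · rw [Function.update_self, hup x hxs]; exact (hv x hxs i).1
  · rw [hup x hxs, hup y hys]; exact hb x hxs y hys i

theorem rel_iff_rel_apply {E : Γ → Γ → Prop} (hE : Equivalence E)
    (hdef : ∀ x y x' y' : Γ, x ≠ y → x' ≠ y' →
      (∀ i, o i x y ↔ o i x' y') → (E x y ↔ E x' y'))
    (g : Γ ≃ Γ) (hg : ∀ i x y, o i x y ↔ o i (g x) (g y)) (x y : Γ) :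
    E x y ↔ E (g x) (g y) := by
  by_cases hxy : x = y
  · subst hxy
    exact iff_of_true (hE.refl x) (hE.refl (g x))
  · exact hdef x y (g x) (g y) hxy (g.injective.ne hxy) (fun i => hg i x y)

variable [∀ i, IsStrictTotalOrder Γ (o i)] {E : Γ → Γ → Prop} {Q : Set ι} {A : Finset Γ}
  {f : Γ → Γ}

theorem IsQuotientPartialIso.rel_of_rel (hf : IsQuotientPartialIso o E Q A f)
    (hE : Equivalence E) {i : ι} (hi : i ∈ Q) (hconv : ConvexClasses (o i) E) {x y x' y' : Γ}
    (hx : x ∈ A) (hy : y ∈ A) (hxy : ¬ E x y) (hx' : E (f x) x') (hy' : E (f y) y')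
    (h : o i x y) : o i x' y' :=
  hconv.rel_of_rel hE (fun h' => hxy ((hf x hx y hy).1.mpr h')) hx' hy'
    (((hf x hx y hy).2 hxy i hi).mp h)

theorem exists_point_in_new_class (hE : Equivalence E)
    (hconv : ∀ i ∈ Q, ConvexClasses (o i) E) (hdense : ∀ i ∉ Q, DenseClasses (o i) E)
    (hgen : GenericClasses o E) {s : Finset Γ} {b : Γ → Γ}
    (hf : IsQuotientPartialIso o E Q A f) (hsA : s ⊆ A) {a : Γ} (haA : a ∈ A)
    (has : ∀ y ∈ s, ¬ E a y) (hbE : ∀ x ∈ s, E (f x) (b x)) (a' : Γ)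
    (ha' : ∀ y ∈ s, ∀ i, (o i y a → o i (b y) a') ∧ (o i a y → o i a' (b y))) :
    ∃ v, E (f a) v ∧
      ∀ y ∈ s, ∀ i, (o i y a ↔ o i (b y) v) ∧ (o i a y ↔ o i v (b y)) := by
  classical
  have hcut : ∀ i, ∃ lo hi : Option Γ,
      (∃ x, E x (f a) ∧ (∀ u ∈ lo, o i u x) ∧ ∀ w ∈ hi, o i x w) ∧
      ∀ x, E x (f a) → (∀ u ∈ lo, o i u x) → (∀ w ∈ hi, o i x w) →
        ∀ y ∈ s, (o i y a → o i (b y) x) ∧ (o i a y → o i x (b y)) := by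
    intro i
    by_cases hi : i ∈ Q
    · refine ⟨none, none, ⟨f a, hE.refl _, by simp, by simp⟩, fun x hx _ _ y hy => ?_⟩
      have hya : ¬ E y a := fun h => has y hy (hE.symm h)
      exact ⟨hf.rel_of_rel hE hi (hconv i hi) (hsA hy) haA hya (hbE y hy) (hE.symm hx),
        hf.rel_of_rel hE hi (hconv i hi) haA (hsA hy) (has y hy) (hE.symm hx) (hbE y hy)⟩
    · obtain ⟨lo, hi', hne, hlohi⟩ := exists_cut_interval_of_dense (o i) (C := (E · (f a)))
        ⟨f a, hE.refl _⟩ (fun u w h => hdense i hi u w h (f a)) (s.image b) a'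
      refine ⟨lo, hi', hne, fun x _ hlx hxh y hy => ?_⟩
      have hxy := hlohi x hlx hxh (b y) (Finset.mem_image_of_mem b hy)
      exact ⟨fun h => hxy.1 ((ha' y hy i).1 h), fun h => hxy.2 ((ha' y hy i).2 h)⟩
  choose lo hi hne hlohi using hcut
  obtain ⟨v, hv, hvi⟩ := hgen (f a) lo hi hne
  refine ⟨v, hE.symm hv, fun y hy i => ?_⟩
  have hya : y ≠ a := by rintro rfl; exact has y hy (hE.refl y)
  obtain ⟨h₁, h₂⟩ := hlohi i v hv (hvi i).1 (hvi i).2 y hy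
  exact ⟨rel_iff_rel_of_imp_of_imp (o i) hya h₁ h₂,
    rel_iff_rel_of_imp_of_imp (o i) hya.symm h₂ h₁⟩

theorem IsQuotientPartialIso.exists_lift (hf : IsQuotientPartialIso o E Q A f)
    (hE : Equivalence E)
    (hdef : ∀ x y x' y' : Γ, x ≠ y → x' ≠ y' →
      (∀ i, o i x y ↔ o i x' y') → (E x y ↔ E x' y'))
    (hom : IsHomogeneous o) (hconv : ∀ i ∈ Q, ConvexClasses (o i) E)
    (hdense : ∀ i ∉ Q, DenseClasses (o i) E) (hgen : GenericClasses o E) :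
    ∀ s ⊆ A, ∃ b : Γ → Γ, (∀ x ∈ s, E (f x) (b x)) ∧ IsPartialIso o s b := by
  classical
  intro s
  induction s using Finset.induction_on with
  | empty => exact fun _ => ⟨id, by simp, by simp [IsPartialIso]⟩
  | insert a s ha ih =>
    intro hsub
    obtain ⟨haA, hsA⟩ := Finset.insert_subset_iff.mp hsub
    obtain ⟨b, hbE, hb⟩ := ih hsA
    obtain ⟨σ, hσ, hσb⟩ := hom s b hb
    have hσa : ∀ y ∈ s, ∀ i,
        (o i y a ↔ o i (b y) (σ a)) ∧ (o i a y ↔ o i (σ a) (b y)) :=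
      fun y hy i => by rw [← hσb y hy]; exact ⟨hσ i y a, hσ i a y⟩
    obtain ⟨v, hvE, hv⟩ :
        ∃ v, E (f a) v ∧
          ∀ y ∈ s, ∀ i, (o i y a ↔ o i (b y) v) ∧ (o i a y ↔ o i v (b y)) := by
      by_cases hc : ∃ a₀ ∈ s, E a a₀
      · obtain ⟨a₀, ha₀, haa₀⟩ := hc
        have h₁ : E (f a) (f a₀) := (hf a haA a₀ (hsA ha₀)).1.mp haa₀
        have h₂ : E (b a₀) (σ a) :=
          hσb a₀ ha₀ ▸ (rel_iff_rel_apply hE hdef σ hσ a₀ a).mp (hE.symm haa₀)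
        exact ⟨σ a, hE.trans h₁ (hE.trans (hbE a₀ ha₀) h₂), hσa⟩
      · push Not at hc
        exact exists_point_in_new_class hE hconv hdense hgen hf hsA haA hc hbE (σ a)
          fun y hy i => ⟨(hσa y hy i).1.mp, (hσa y hy i).2.mp⟩
    refine ⟨Function.update b a v, fun x hx => ?_, hb.update_insert ha hv⟩
    rcases Finset.mem_insert.mp hx with rfl | hx
    · simpa using hvE
    · rw [Function.update_of_ne (ne_of_mem_of_not_mem hx ha)]
      exact hbE x hx

end PermutationStructure

theorem stmt19_general {Γ : Type*} (k ℓ : ℕ) (o : Fin k → Γ → Γ → Prop)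
    (ho : ∀ i, IsStrictTotalOrder Γ (o i))
    -- homogeneity of Γ
    (hom : ∀ (A : Finset Γ) (f : Γ → Γ),
      (∀ a ∈ A, ∀ b ∈ A, ∀ i, o i a b ↔ o i (f a) (f b)) →
      ∃ g : Γ ≃ Γ, (∀ i x y, o i x y ↔ o i (g x) (g y)) ∧ ∀ a ∈ A, g a = f a)
    (E : Γ → Γ → Prop) (hE : Equivalence E)
    -- E is ∅-definable (a union of 2-types), non-trivial and minimal such
    (hdef : ∀ x y x' y' : Γ, x ≠ y → x' ≠ y' →
      (∀ i, o i x y ↔ o i x' y') → (E x y ↔ E x' y'))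
    -- E-classes are convex for the first ℓ orders, dense for the rest
    (hconv : ∀ i : Fin k, (i : ℕ) < ℓ → ∀ a b c, E a c → o i a b → o i b c → E a b)
    (hdense : ∀ i : Fin k, ℓ ≤ (i : ℕ) → ∀ a b, o i a b → ∀ c, ∃ x, E x c ∧ o i a x ∧ o i x b)
    -- each E-class is generic: finite intersections of nonempty open intervals
    -- of the class are nonempty in the class
    (hgen : ∀ c : Γ, ∀ lo hi : Fin k → Option Γ,
      (∀ i, ∃ x, E x c ∧ (∀ a, lo i = some a → o i a x) ∧ (∀ b, hi i = some b → o i x b)) →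
      ∃ x, E x c ∧ ∀ i, (∀ a, lo i = some a → o i a x) ∧ (∀ b, hi i = some b → o i x b)) :
    -- homogeneity of the quotient (Γ/E, o 0, …, o (ℓ-1)), on representatives:
    ∀ (A : Finset Γ) (f : Γ → Γ),
      (∀ a ∈ A, ∀ b ∈ A, (E a b ↔ E (f a) (f b)) ∧
        (¬ E a b → ∀ i : Fin k, (i : ℕ) < ℓ → (o i a b ↔ o i (f a) (f b)))) →
      ∃ g : Γ → Γ,
        -- g induces an automorphism of the quotient
        (∀ x y, E x y ↔ E (g x) (g y)) ∧
        (∀ y, ∃ x, E (g x) y) ∧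
        (∀ x y, ¬ E x y → ∀ i : Fin k, (i : ℕ) < ℓ → (o i x y ↔ o i (g x) (g y))) ∧
        -- extending f modulo E
        (∀ a ∈ A, E (g a) (f a)) := by
  intro A f hf
  obtain ⟨b, hbE, hb⟩ := IsQuotientPartialIso.exists_lift (Q := {i : Fin k | (i : ℕ) < ℓ})
    hf hE hdef hom hconv (fun i hi => hdense i (not_lt.mp hi)) hgen A subset_rfl
  obtain ⟨g, hg, hgb⟩ := hom A b hb
  refine ⟨g, rel_iff_rel_apply hE hdef g hg, fun y => ⟨g.symm y, ?_⟩,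
    fun x y _ i _ => hg i x y, fun a ha => hgb a ha ▸ hE.symm (hbE a ha)⟩
  simpa using hE.refl y

/-- Let `Γ` be a homogeneous `k`-dimensional permutation structure
with minimal non-trivial ∅-definable equivalence relation `E` whose classes are
`o i`-convex for `i < ℓ` and `o i`-dense for `i ≥ ℓ`, each class being generic
(every finite intersection of nonempty open intervals of the class, one in each
order, is nonempty in the class).  Then the quotient `(Γ/E, o 0, …, o (ℓ-1))` is
homogeneous: every finite partial isomorphism of the quotient (stated here on
representatives) extends to an automorphism of the quotient. -/
theorem stmt19 {Γ : Type*} (k ℓ : ℕ) (o : Fin k → Γ → Γ → Prop)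
    (ho : ∀ i, IsStrictTotalOrder Γ (o i))
    -- homogeneity of Γ
    (hom : ∀ (A : Finset Γ) (f : Γ → Γ),
      (∀ a ∈ A, ∀ b ∈ A, ∀ i, o i a b ↔ o i (f a) (f b)) →
      ∃ g : Γ ≃ Γ, (∀ i x y, o i x y ↔ o i (g x) (g y)) ∧ ∀ a ∈ A, g a = f a)
    (E : Γ → Γ → Prop) (hE : Equivalence E)
    -- E is ∅-definable (a union of 2-types), non-trivial and minimal such
    (hdef : ∀ x y x' y' : Γ, x ≠ y → x' ≠ y' →
      (∀ i, o i x y ↔ o i x' y') → (E x y ↔ E x' y'))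
    (hnontriv : (∃ x y, x ≠ y ∧ E x y) ∧ (∃ x y, ¬ E x y))
    (hmin : ∀ E' : Γ → Γ → Prop, Equivalence E' →
      (∀ x y x' y' : Γ, x ≠ y → x' ≠ y' →
        (∀ i, o i x y ↔ o i x' y') → (E' x y ↔ E' x' y')) →
      (∃ x y, x ≠ y ∧ E' x y) → (∀ x y, E' x y → E x y) →
      ∀ x y, E' x y ↔ E x y)
    -- E-classes are convex for the first ℓ orders, dense for the rest
    (hconv : ∀ i : Fin k, (i : ℕ) < ℓ → ∀ a b c, E a c → o i a b → o i b c → E a b)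
    (hdense : ∀ i : Fin k, ℓ ≤ (i : ℕ) → ∀ a b, o i a b → ∀ c, ∃ x, E x c ∧ o i a x ∧ o i x b)
    -- each E-class is generic: finite intersections of nonempty open intervals
    -- of the class are nonempty in the class
    (hgen : ∀ c : Γ, ∀ lo hi : Fin k → Option Γ,
      (∀ i, ∃ x, E x c ∧ (∀ a, lo i = some a → o i a x) ∧ (∀ b, hi i = some b → o i x b)) →
      ∃ x, E x c ∧ ∀ i, (∀ a, lo i = some a → o i a x) ∧ (∀ b, hi i = some b → o i x b)) :
    -- homogeneity of the quotient (Γ/E, o 0, …, o (ℓ-1)), on representatives: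
    ∀ (A : Finset Γ) (f : Γ → Γ),
      (∀ a ∈ A, ∀ b ∈ A, (E a b ↔ E (f a) (f b)) ∧
        (¬ E a b → ∀ i : Fin k, (i : ℕ) < ℓ → (o i a b ↔ o i (f a) (f b)))) →
      ∃ g : Γ → Γ,
        -- g induces an automorphism of the quotient
        (∀ x y, E x y ↔ E (g x) (g y)) ∧
        (∀ y, ∃ x, E (g x) y) ∧
        (∀ x y, ¬ E x y → ∀ i : Fin k, (i : ℕ) < ℓ → (o i x y ↔ o i (g x) (g y))) ∧
        -- extending f modulo E
        (∀ a ∈ A, E (g a) (f a)) :=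
  stmt19_general k ℓ o ho hom E hE hdef hconv hdense hgen
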